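/- Let A be an n×n matrix, B' symmetric n×n, and let E₋, E₊ be symmetric solutions of the Riccati equation X A + Aᵀ X + X B' X − W = 0 (with W symmetric). Set M₋ = A + B'E₋ and M₊ = A + B'E₊. Then (E₊ − E₋) M₊ + M₋ᵀ (E₊ − E₋) = 0. In particular, if E₊ − E₋ is invertible, then M₊ = −(E₊−E₋)⁻¹ M₋ᵀ (E₊−E₋), so the eigenvalues of M₊ are the negatives of the eigenvalues of M₋. -/
import Mathlib


open Matrix

lemma spectrum_transpose_aux {m : ℕ} (M : Matrix (Fin m) (Fin m) ℂ) :
    spectrum ℂ Mᵀ = spectrum ℂ M := by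
  ext μ
  simp only [spectrum.mem_iff]
  have h : algebraMap ℂ (Matrix (Fin m) (Fin m) ℂ) μ - Mᵀ =
      (algebraMap ℂ (Matrix (Fin m) (Fin m) ℂ) μ - M)ᵀ := by
    rw [transpose_sub]
    congr 1
    simp [Matrix.algebraMap_eq_diagonal, Matrix.diagonal_transpose]
  rw [h]
  constructor <;> intro hu hv <;> apply hu
  · rw [Matrix.isUnit_iff_isUnit_det] at hv ⊢
    rwa [Matrix.det_transpose]
  · rw [Matrix.isUnit_iff_isUnit_det] at hv ⊢
    rwa [Matrix.det_transpose] at hv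

theorem riccati_eigenvalue_symmetry (n : ℕ)
    (A B' W Em Ep : Matrix (Fin n) (Fin n) ℝ)
    (hB' : B'.IsSymm) (hW : W.IsSymm) (hEm : Em.IsSymm) (hEp : Ep.IsSymm)
    (hRm : Em * A + Aᵀ * Em + Em * B' * Em - W = 0)
    (hRp : Ep * A + Aᵀ * Ep + Ep * B' * Ep - W = 0) :
    (Ep - Em) * (A + B' * Ep) + (A + B' * Em)ᵀ * (Ep - Em) = 0 ∧
    (IsUnit (Ep - Em) →
      A + B' * Ep = -((Ep - Em)⁻¹ * (A + B' * Em)ᵀ * (Ep - Em)) ∧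
      spectrum ℂ ((A + B' * Ep).map (Complex.ofReal : ℝ → ℂ)) =
        (fun μ : ℂ => -μ) '' spectrum ℂ ((A + B' * Em).map (Complex.ofReal : ℝ → ℂ))) := by
  have key : (Ep - Em) * (A + B' * Ep) + (A + B' * Em)ᵀ * (Ep - Em) = 0 := by
    have hB := hB'.eq
    have hM := hEm.eq
    have h1 : Em * A + Aᵀ * Em + Em * B' * Em = W := by
      rw [← sub_eq_zero]; exact hRm
    have h2 : Ep * A + Aᵀ * Ep + Ep * B' * Ep = W := by
      rw [← sub_eq_zero]; exact hRp
    rw [transpose_add, transpose_mul, hB, hM]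
    have h3 : (Ep - Em) * (A + B' * Ep) + (Aᵀ + Em * B') * (Ep - Em) =
        (Ep * A + Aᵀ * Ep + Ep * B' * Ep) - (Em * A + Aᵀ * Em + Em * B' * Em) := by
      noncomm_ring
    rw [h3, h1, h2, sub_self]
  refine ⟨key, fun hu => ?_⟩
  have hud : IsUnit (Ep - Em).det := (Matrix.isUnit_iff_isUnit_det _).mp hu
  have hconj : A + B' * Ep = -((Ep - Em)⁻¹ * (A + B' * Em)ᵀ * (Ep - Em)) := by
    have h2 : (Ep - Em) * (A + B' * Ep) = -((A + B' * Em)ᵀ * (Ep - Em)) := by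
      rw [eq_neg_iff_add_eq_zero]; exact key
    calc A + B' * Ep = (Ep - Em)⁻¹ * ((Ep - Em) * (A + B' * Ep)) := by
          rw [← mul_assoc, Matrix.nonsing_inv_mul _ hud, one_mul]
      _ = -((Ep - Em)⁻¹ * (A + B' * Em)ᵀ * (Ep - Em)) := by
          rw [h2]; noncomm_ring
  refine ⟨hconj, ?_⟩
  set F := (RingHom.mapMatrix (Complex.ofRealHom : ℝ →+* ℂ) :
    Matrix (Fin n) (Fin n) ℝ →+* Matrix (Fin n) (Fin n) ℂ) with hF
  have hmul1 : F ((Ep - Em)⁻¹) * F (Ep - Em) = 1 := by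
    rw [← _root_.map_mul, Matrix.nonsing_inv_mul _ hud, _root_.map_one]
  have hmul2 : F (Ep - Em) * F ((Ep - Em)⁻¹) = 1 := by
    rw [← _root_.map_mul, Matrix.mul_nonsing_inv _ hud, _root_.map_one]
  set u : (Matrix (Fin n) (Fin n) ℂ)ˣ := ⟨F (Ep - Em), F ((Ep - Em)⁻¹), hmul2, hmul1⟩ with hu_def
  have hT : F ((A + B' * Em)ᵀ) = (F (A + B' * Em))ᵀ := rfl
  have hFP : F (A + B' * Ep) =
      -((↑u⁻¹ : Matrix (Fin n) (Fin n) ℂ) * (F (A + B' * Em))ᵀ * (↑u : Matrix (Fin n) (Fin n) ℂ)) := by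
    rw [hconj, map_neg, _root_.map_mul, _root_.map_mul, hT]
    rfl
  have hmapP : (A + B' * Ep).map (Complex.ofReal : ℝ → ℂ) = F (A + B' * Ep) := rfl
  have hmapM : (A + B' * Em).map (Complex.ofReal : ℝ → ℂ) = F (A + B' * Em) := rfl
  rw [hmapP, hmapM, hFP, ← spectrum.neg_eq, spectrum.units_conjugate', spectrum_transpose_aux]
  ext μ
  simp only [Set.mem_neg, Set.mem_image]
  constructor
  · intro h; exact ⟨-μ, h, by ring⟩
  · rintro ⟨x, hx, rfl⟩; simpa using hx
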